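/- Let G be an undirected graph whose vertex set is the disjoint union of independent sets A, B, C with |A| = |B| = |C| = q, and construct the associated scheduling instance. If the associated scheduling instance admits a feasible schedule of makespan at most 12(q+1), then the vertices of G can be partitioned into q sets of size three, each inducing a triangle of G. -/

import Mathlib

/-!  Coupled-task scheduling with compatibility constraints. -/

/-- A coupled-task `(a, L, b)`: a first sub-task of processing time `a`,
an idle period of length `L`, then a second sub-task of processing time `b`. -/
structure CTask where
  a : ℝ
  L : ℝ
  b : ℝ

namespace CTask

/-- The set of time instants occupied by the task when started at time `s`. -/
def occupied (t : CTask) (s : ℝ) : Set ℝ :=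
  Set.Ico s (s + t.a) ∪ Set.Ico (s + t.a + t.L) (s + t.a + t.L + t.b)

/-- The idle window of the task when started at time `s`. -/
def idleWindow (t : CTask) (s : ℝ) : Set ℝ :=
  Set.Ico (s + t.a) (s + t.a + t.L)

/-- The span of the task when started at time `s`. -/
def span (t : CTask) (s : ℝ) : Set ℝ :=
  Set.Ico s (s + t.a + t.L + t.b)

/-- Total duration `a + L + b` of a coupled-task. -/
def dur (t : CTask) : ℝ := t.a + t.L + t.b

/-- All three components of the task are positive. -/
def Positive (t : CTask) : Prop := 0 < t.a ∧ 0 < t.L ∧ 0 < t.b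

end CTask

/-- The stretched coupled-task with stretch factor `α`, i.e. `(α, α, α)`. -/
def stretched (α : ℝ) : CTask := ⟨α, α, α⟩

/-- A scheduling instance: a coupled-task for each index, together with a
compatibility relation.  `compat t' t` means that the compatibility graph
contains the arc `(t', t)` (so `t'` may be executed during the idle window of
`t`); an undirected edge `{t, t'}` is modelled by `compat t' t ∧ compat t t'`. -/
structure SchedInstance (ι : Type*) where
  task : ι → CTask
  compat : ι → ι → Prop

namespace SchedInstance

variable {ι : Type*}

/-- A schedule `σ` (assigning a start time to every task) is feasible if all
start times are nonnegative, occupied intervals of distinct tasks are pairwise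
disjoint, and whenever an occupied interval of `t'` meets the idle window of
`t`, the compatibility graph contains the arc (or edge) from `t'` to `t`. -/
def Feasible (I : SchedInstance ι) (σ : ι → ℝ) : Prop :=
  (∀ t, 0 ≤ σ t) ∧
  (∀ t t', t ≠ t' →
    Disjoint ((I.task t).occupied (σ t)) ((I.task t').occupied (σ t'))) ∧
  (∀ t t', t ≠ t' →
    (((I.task t').occupied (σ t')) ∩ ((I.task t).idleWindow (σ t))).Nonempty →
      I.compat t' t)

/-- Completion time of task `t` under schedule `σ`. -/
def endTime (I : SchedInstance ι) (σ : ι → ℝ) (t : ι) : ℝ :=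
  σ t + (I.task t).dur

/-- The makespan of `σ` is at most `C`. -/
def MakespanLE (I : SchedInstance ι) (σ : ι → ℝ) (C : ℝ) : Prop :=
  ∀ t, I.endTime σ t ≤ C

/-- The makespan of `σ` is exactly `C`. -/
def MakespanEq (I : SchedInstance ι) (σ : ι → ℝ) (C : ℝ) : Prop :=
  I.MakespanLE σ C ∧ ∃ t, I.endTime σ t = C

end SchedInstance

/-- The three extra tasks `z₀, z₁, z₂` of the Partition-into-Triangles
reduction. -/
inductive Extra | z0 | z1 | z2

/-- The scheduling instance associated with a graph `G` whose vertex set is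
partitioned into independent sets `A`, `B`, `C`: each vertex of `A ∪ B` yields
a stretched task of factor `1`, each vertex of `C` a stretched task of factor
`4`; the extra tasks `z₀, z₁` have factor `1` and `z₂` has factor `4`.  Edges
of `G` inside `A ∪ B` are kept undirected, edges between `A ∪ B` and `C` are
oriented toward `C`; moreover there are the edge `{z₀, z₁}`, the arcs
`(z₀, z₂)` and `(z₁, z₂)`, an edge between `z₀` and every `A`-task and an edge
between `z₁` and every `B`-task. -/
def triInst {V : Type*} [DecidableEq V] (G : SimpleGraph V) (A B C : Finset V) :
    SchedInstance (V ⊕ Extra) where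
  task := fun i => match i with
    | .inl v => if v ∈ C then stretched 4 else stretched 1
    | .inr .z0 => stretched 1
    | .inr .z1 => stretched 1
    | .inr .z2 => stretched 4
  compat := fun i j => match i, j with
    | .inl u, .inl v => G.Adj u v ∧ u ∉ C
    | .inl u, .inr .z0 => u ∈ A
    | .inr .z0, .inl u => u ∈ A
    | .inl u, .inr .z1 => u ∈ B
    | .inr .z1, .inl u => u ∈ B
    | .inr .z0, .inr .z1 => True
    | .inr .z1, .inr .z0 => True
    | .inr .z0, .inr .z2 => True
    | .inr .z1, .inr .z2 => True
    | _, _ => False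

/-- The vertices of `G` can be partitioned into `q` disjoint sets of size
three, each inducing a triangle of `G`. -/
def HasTrianglePartition {V : Type*} [Fintype V] [DecidableEq V] (G : SimpleGraph V) (q : ℕ) : Prop :=
  ∃ Part : Finset (Finset V), Part.card = q ∧
    (∀ S ∈ Part, ∀ S' ∈ Part, S ≠ S' → Disjoint S S') ∧
    Part.biUnion id = Finset.univ ∧
    ∀ S ∈ Part, S.card = 3 ∧ ∀ u ∈ S, ∀ v ∈ S, u ≠ v → G.Adj u v

/-!
The tasks have total processing time `2 (2q + 4q + 6) = 12 (q + 1)`, so a schedule within this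
makespan keeps the machine busy at every instant of `[0, 12 (q + 1))`. For a `C`-task `c` started
at `s`, the instants `s + 4` and `s + 5` lie in its idle window, so they are occupied by tasks that
may run there, i.e. by unit tasks `u`, `v` of neighbours of `c` in `A ∪ B`. As `c` occupies
`[s, s + 4)`, these start exactly at `s + 4` and `s + 5`; then `v` runs in the idle window of `u`,
which forces the edge `uv`. Distinct `C`-tasks start at least `4` apart, so the `q` triangles
`{c, u, v}` are disjoint and, having `3q` vertices in total, partition the vertex set.
-/

open Set MeasureTheory Filter Topology

namespace CTask

variable {t : CTask} {s : ℝ}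

theorem disjoint_occupied_idleWindow (t : CTask) (s : ℝ) :
    Disjoint (t.occupied s) (t.idleWindow s) := by
  refine Disjoint.union_left ?_ ?_ <;>
    exact Ico_disjoint_Ico.2 (by simp only [min_le_iff, le_max_iff, le_refl, true_or, or_true])

theorem occupied_subset_span (ht : t.Positive) : t.occupied s ⊆ t.span s := by
  obtain ⟨ha, hL, hb⟩ := ht
  exact union_subset (Ico_subset_Ico le_rfl (by linarith)) (Ico_subset_Ico (by linarith) le_rfl)

theorem idleWindow_subset_span (ht : t.Positive) : t.idleWindow s ⊆ t.span s := by
  obtain ⟨ha, hL, hb⟩ := ht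
  exact Ico_subset_Ico (by linarith) (by linarith)

theorem volume_occupied (ht : t.Positive) :
    volume (t.occupied s) = ENNReal.ofReal (t.a + t.b) := by
  obtain ⟨ha, hL, hb⟩ := ht
  rw [occupied, measure_union (Ico_disjoint_Ico.2 ((min_le_left _ _).trans
      (le_max_of_le_right (by linarith)))) measurableSet_Ico, Real.volume_Ico, Real.volume_Ico,
    ← ENNReal.ofReal_add (by linarith) (by linarith)]
  ring_nf

theorem eventually_nhdsGE_notMem_occupied {x : ℝ} (hx : x ∉ t.occupied s) :
    ∀ᶠ y in 𝓝[≥] x, y ∉ t.occupied s := by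
  have key : ∀ {l r : ℝ}, x ∉ Ico l r → ∀ᶠ y in 𝓝[≥] x, y ∉ Ico l r := by
    intro l r hlr
    rcases lt_or_ge x l with hxl | hlx
    · filter_upwards [Ico_mem_nhdsGE hxl] with y hy using fun h => hy.2.not_ge h.1
    · filter_upwards [self_mem_nhdsWithin] with y hy using
        fun h => hlr ⟨hlx, lt_of_le_of_lt hy h.2⟩
  simp only [occupied, mem_union, not_or] at hx ⊢
  exact (key hx.1).and (key hx.2)

end CTask

theorem stretched_positive {α : ℝ} (hα : 0 < α) : (stretched α).Positive := ⟨hα, hα, hα⟩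

@[simp]
theorem mem_occupied_stretched {α r x : ℝ} :
    x ∈ (stretched α).occupied r ↔
      r ≤ x ∧ x < r + α ∨ r + α + α ≤ x ∧ x < r + α + α + α := by
  simp only [CTask.occupied, stretched, mem_union, mem_Ico]

@[simp]
theorem mem_idleWindow_stretched {α r x : ℝ} :
    x ∈ (stretched α).idleWindow r ↔ r + α ≤ x ∧ x < r + α + α := by
  simp only [CTask.idleWindow, stretched, mem_Ico]

theorem add_le_or_add_le_of_disjoint_occupied_stretched {α β r r' : ℝ} (hα : 0 < α) (hβ : 0 < β)
    (h : Disjoint ((stretched α).occupied r) ((stretched β).occupied r')) :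
    r + α ≤ r' ∨ r' + β ≤ r := by
  have hfirst : Disjoint (Ico r (r + α)) (Ico r' (r' + β)) :=
    h.mono subset_union_left subset_union_left
  rw [Ico_disjoint_Ico, min_le_iff, le_max_iff, le_max_iff] at hfirst
  rcases hfirst with (h | h) | (h | h)
  · linarith
  · exact .inl h
  · exact .inr h
  · linarith

theorem eq_of_mem_occupied_stretched {β r p : ℝ} (hβ : 0 < β)
    (hp : p ∈ (stretched β).occupied r)
    (hgap : ∀ y ∈ Ico (p - 2 * β) p, y ∉ (stretched β).occupied r) : r = p := by
  by_contra hne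
  rw [mem_occupied_stretched] at hp
  rcases hp with ⟨h1, h2⟩ | ⟨h1, h2⟩
  · exact hgap r ⟨by linarith, lt_of_le_of_ne h1 hne⟩
      (mem_occupied_stretched.2 (.inl ⟨le_rfl, by linarith⟩))
  · rcases h1.eq_or_lt with h1 | h1
    · exact hgap r ⟨by linarith, by linarith⟩
        (mem_occupied_stretched.2 (.inl ⟨le_rfl, by linarith⟩))
    · exact hgap (r + β + β) ⟨by linarith, h1⟩
        (mem_occupied_stretched.2 (.inr ⟨le_rfl, by linarith⟩))

namespace SchedInstance

variable {ι : Type*} {I : SchedInstance ι} {σ : ι → ℝ} {M : ℝ}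

theorem Feasible.span_subset (hσ : I.Feasible σ) (hmk : I.MakespanLE σ M) (t : ι) :
    (I.task t).span (σ t) ⊆ Ico 0 M := by
  have hend := hmk t
  simp only [endTime, CTask.dur] at hend
  exact Ico_subset_Ico (hσ.1 t) (by linarith)

theorem Feasible.ne_and_compat_of_mem {t t' : ι} {x : ℝ} (hσ : I.Feasible σ)
    (hx' : x ∈ (I.task t').occupied (σ t')) (hx : x ∈ (I.task t).idleWindow (σ t)) :
    t ≠ t' ∧ I.compat t' t := by
  have hne : t ≠ t' := by
    rintro rfl
    exact (CTask.disjoint_occupied_idleWindow _ _).notMem_of_mem_left hx' hx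
  exact ⟨hne, hσ.2.2 t t' hne ⟨x, hx', hx⟩⟩

/-- The occupied sets fill `[0, M)` up to a null set, whereas an unoccupied instant would leave a
whole interval to its right unoccupied, each occupied set being a finite union of intervals `Ico`. -/
theorem Feasible.Ico_subset_iUnion_occupied [Fintype ι] (hσ : I.Feasible σ)
    (hmk : I.MakespanLE σ M) (hpos : ∀ t, (I.task t).Positive)
    (hload : M ≤ ∑ t, ((I.task t).a + (I.task t).b)) :
    Ico 0 M ⊆ ⋃ t, (I.task t).occupied (σ t) := by
  intro x hx
  by_contra hfree
  set U := ⋃ t, (I.task t).occupied (σ t)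
  have hmeas (t : ι) : MeasurableSet ((I.task t).occupied (σ t)) :=
    measurableSet_Ico.union measurableSet_Ico
  have hUsub : U ⊆ Ico 0 M :=
    iUnion_subset fun t => (CTask.occupied_subset_span (hpos t)).trans (hσ.span_subset hmk t)
  have hvolU : ENNReal.ofReal M ≤ volume U := by
    rw [measure_iUnion (fun t t' h => hσ.2.1 t t' h) hmeas, tsum_fintype]
    simp_rw [CTask.volume_occupied (hpos _)]
    rw [← ENNReal.ofReal_sum_of_nonneg fun t _ => by linarith [(hpos t).1, (hpos t).2.2]]
    exact ENNReal.ofReal_le_ofReal hload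
  have hnull : volume (Ico 0 M \ U) = 0 := by
    rw [measure_sdiff hUsub (MeasurableSet.iUnion hmeas).nullMeasurableSet
      (ne_top_of_le_ne_top (by simp) (measure_mono hUsub)), Real.volume_Ico, sub_zero]
    exact tsub_eq_zero_of_le hvolU
  have hnhds : Ico 0 M \ U ∈ 𝓝[≥] x := by
    simp only [U, mem_iUnion, not_exists] at hfree
    filter_upwards [Ico_mem_nhdsGE_of_mem hx,
      eventually_all.2 fun t => CTask.eventually_nhdsGE_notMem_occupied (hfree t)]
      with y hy hyU using ⟨hy, by simpa [U] using hyU⟩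
  obtain ⟨u, hxu : x < u, hsub⟩ := mem_nhdsGE_iff_exists_Ico_subset.1 hnhds
  have hzero := measure_mono_null hsub hnull
  rw [Real.volume_Ico, ENNReal.ofReal_eq_zero] at hzero
  linarith

end SchedInstance

theorem hasTrianglePartition_of_pairwiseDisjoint {V : Type*} [Fintype V] [DecidableEq V]
    {G : SimpleGraph V} {C : Finset V} {T : V → Finset V}
    (hV : Fintype.card V = 3 * C.card) (hT : ∀ c ∈ C, G.IsNClique 3 (T c))
    (hdisj : (C : Set V).PairwiseDisjoint T) : HasTrianglePartition G C.card := by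
  have hinj : Set.InjOn T C := fun c hc c' hc' h => by
    obtain ⟨x, hx⟩ := Finset.card_pos.1 ((hT c hc).card_eq.symm ▸ three_pos)
    exact hdisj.elim_finset hc hc' x hx (h ▸ hx)
  refine ⟨C.image T, Finset.card_image_of_injOn hinj, ?_, ?_, ?_⟩
  · simp only [Finset.mem_image]
    rintro _ ⟨c, hc, rfl⟩ _ ⟨c', hc', rfl⟩ hne
    exact hdisj hc hc' fun h => hne (h ▸ rfl)
  · refine Finset.eq_univ_of_card _ ?_
    simp only [Finset.image_biUnion, id]
    rw [Finset.card_biUnion hdisj, hV,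
      Finset.sum_congr rfl fun c hc => (hT c hc).card_eq, Finset.sum_const, smul_eq_mul, mul_comm]
  · simp only [Finset.mem_image]
    rintro _ ⟨c, hc, rfl⟩
    exact ⟨(hT c hc).card_eq, fun x hx y hy => (hT c hc).isClique hx hy⟩

deriving instance DecidableEq for Extra

instance : Fintype Extra := ⟨{.z0, .z1, .z2}, fun x => by cases x <;> simp⟩

theorem Extra.univ_eq : (Finset.univ : Finset Extra) = {.z0, .z1, .z2} := rfl

section TriInst

variable {V : Type*} [DecidableEq V] {G : SimpleGraph V} {A B C : Finset V}

theorem triInst_task_inl_of_mem {v : V} (hv : v ∈ C) :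
    (triInst G A B C).task (.inl v) = stretched 4 := by
  simp [triInst, hv]

theorem triInst_task_inl_of_notMem {v : V} (hv : v ∉ C) :
    (triInst G A B C).task (.inl v) = stretched 1 := by
  simp [triInst, hv]

theorem triInst_task_positive (t : V ⊕ Extra) : ((triInst G A B C).task t).Positive := by
  rcases t with v | (_ | _ | _)
  · by_cases hv : v ∈ C
    · rw [triInst_task_inl_of_mem hv]
      exact stretched_positive four_pos
    · rw [triInst_task_inl_of_notMem hv]
      exact stretched_positive one_pos
  all_goals exact stretched_positive (by norm_num)

theorem triInst_sum_processingTime [Fintype V] :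
    ∑ t, (((triInst G A B C).task t).a + ((triInst G A B C).task t).b) =
      2 * Fintype.card V + 6 * C.card + 12 := by
  have hvertex (v : V) :
      ((triInst G A B C).task (.inl v)).a + ((triInst G A B C).task (.inl v)).b =
        2 + if v ∈ C then 6 else 0 := by
    by_cases hv : v ∈ C
    · rw [triInst_task_inl_of_mem hv, if_pos hv]; norm_num [stretched]
    · rw [triInst_task_inl_of_notMem hv, if_neg hv]; norm_num [stretched]
  rw [Fintype.sum_sum_type, Extra.univ_eq]
  simp only [hvertex, Finset.sum_add_distrib, Finset.sum_ite_mem, Finset.univ_inter,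
    Finset.sum_const, Finset.card_univ, nsmul_eq_mul]
  simp [triInst, stretched]
  ring

theorem triInst_compat_inl_of_mem (hAC : Disjoint A C) (hBC : Disjoint B C) {t : V ⊕ Extra}
    {c : V} (hc : c ∈ C) (h : (triInst G A B C).compat t (.inl c)) :
    ∃ u, t = .inl u ∧ u ∉ C ∧ G.Adj u c := by
  rcases t with u | (_ | _ | _)
  · exact ⟨u, rfl, h.2, h.1⟩
  · exact absurd hc (Finset.disjoint_left.1 hAC h)
  · exact absurd hc (Finset.disjoint_left.1 hBC h)
  · exact h.elim

variable {σ : V ⊕ Extra → ℝ} {M : ℝ}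

theorem triInst_exists_adj_mem_occupied (hAC : Disjoint A C) (hBC : Disjoint B C)
    (hσ : (triInst G A B C).Feasible σ) (hmk : (triInst G A B C).MakespanLE σ M)
    (hocc : Ico 0 M ⊆ ⋃ t, ((triInst G A B C).task t).occupied (σ t))
    {c : V} (hc : c ∈ C) {x : ℝ}
    (hx : x ∈ ((triInst G A B C).task (.inl c)).idleWindow (σ (.inl c))) :
    ∃ u, u ∉ C ∧ G.Adj u c ∧ x ∈ ((triInst G A B C).task (.inl u)).occupied (σ (.inl u)) := by
  obtain ⟨t, ht⟩ := mem_iUnion.1 <| hocc <|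
    hσ.span_subset hmk _ (CTask.idleWindow_subset_span (triInst_task_positive _) hx)
  obtain ⟨u, rfl, hu, hadj⟩ :=
    triInst_compat_inl_of_mem hAC hBC hc (hσ.ne_and_compat_of_mem ht hx).2
  exact ⟨u, hu, hadj, ht⟩

theorem triInst_exists_triangle (hAC : Disjoint A C) (hBC : Disjoint B C)
    (hσ : (triInst G A B C).Feasible σ) (hmk : (triInst G A B C).MakespanLE σ M)
    (hocc : Ico 0 M ⊆ ⋃ t, ((triInst G A B C).task t).occupied (σ t))
    {c : V} (hc : c ∈ C) :
    ∃ u v, u ∉ C ∧ v ∉ C ∧ σ (.inl u) = σ (.inl c) + 4 ∧ σ (.inl v) = σ (.inl c) + 5 ∧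
      G.IsNClique 3 {c, u, v} := by
  set I := triInst G A B C
  have hdisj {w w' : V} (h : w ≠ w') : Disjoint ((I.task (.inl w)).occupied (σ (.inl w)))
      ((I.task (.inl w')).occupied (σ (.inl w'))) :=
    hσ.2.1 _ _ (Sum.inl_injective.ne h)
  have hcI : I.task (.inl c) = stretched 4 := triInst_task_inl_of_mem hc
  have hocc_c {y : ℝ} (h1 : σ (.inl c) ≤ y) (h2 : y < σ (.inl c) + 4) :
      y ∈ (I.task (.inl c)).occupied (σ (.inl c)) := by
    rw [hcI]; exact mem_occupied_stretched.2 (.inl ⟨h1, h2⟩)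
  obtain ⟨u, hu, hadju, hxu⟩ := triInst_exists_adj_mem_occupied hAC hBC hσ hmk hocc hc
    (x := σ (.inl c) + 4) (by rw [hcI, mem_idleWindow_stretched]; constructor <;> linarith)
  have huI : I.task (.inl u) = stretched 1 := triInst_task_inl_of_notMem hu
  have hcu : c ≠ u := fun h => hu (h ▸ hc)
  have hσu : σ (.inl u) = σ (.inl c) + 4 := by
    rw [huI] at hxu
    refine eq_of_mem_occupied_stretched one_pos hxu fun y hy hyu => ?_
    exact (hdisj hcu).notMem_of_mem_left (hocc_c (by linarith [hy.1]) hy.2) (huI ▸ hyu)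
  obtain ⟨v, hv, hadjv, hxv⟩ := triInst_exists_adj_mem_occupied hAC hBC hσ hmk hocc hc
    (x := σ (.inl c) + 5) (by rw [hcI, mem_idleWindow_stretched]; constructor <;> linarith)
  obtain ⟨hne, hadjvu, -⟩ := hσ.ne_and_compat_of_mem hxv (t := .inl u)
    (by rw [huI, mem_idleWindow_stretched]; constructor <;> linarith)
  have huv : u ≠ v := Sum.inl_injective.ne_iff.1 hne
  have hcv : c ≠ v := fun h => hv (h ▸ hc)
  have hvI : I.task (.inl v) = stretched 1 := triInst_task_inl_of_notMem hv
  have hσv : σ (.inl v) = σ (.inl c) + 5 := by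
    rw [hvI] at hxv
    refine eq_of_mem_occupied_stretched one_pos hxv fun y hy hyv => ?_
    rcases lt_or_ge y (σ (.inl c) + 4) with h | h
    · exact (hdisj hcv).notMem_of_mem_left (hocc_c (by linarith [hy.1]) h) (hvI ▸ hyv)
    · refine (hdisj huv).notMem_of_mem_left ?_ (hvI ▸ hyv)
      rw [huI]; exact mem_occupied_stretched.2 (.inl ⟨by linarith, by linarith [hy.2]⟩)
  exact ⟨u, v, hu, hv, hσu, hσv,
    SimpleGraph.is3Clique_triple_iff.2 ⟨hadju.symm, hadjv.symm, hadjvu.symm⟩⟩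

theorem triInst_pairwiseDisjoint_triangles (hσ : (triInst G A B C).Feasible σ) {u v : V → V}
    (hu : ∀ c ∈ C, u c ∉ C) (hv : ∀ c ∈ C, v c ∉ C)
    (hσu : ∀ c ∈ C, σ (.inl (u c)) = σ (.inl c) + 4)
    (hσv : ∀ c ∈ C, σ (.inl (v c)) = σ (.inl c) + 5) :
    (C : Set V).PairwiseDisjoint fun c => ({c, u c, v c} : Finset V) := by
  have hmem : ∀ c ∈ C, ∀ x ∈ ({c, u c, v c} : Finset V),
      x = c ∨ x ∉ C ∧ σ (.inl c) + 4 ≤ σ (.inl x) ∧ σ (.inl x) ≤ σ (.inl c) + 5 := by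
    intro c hc x hx
    simp only [Finset.mem_insert, Finset.mem_singleton] at hx
    rcases hx with rfl | rfl | rfl
    · exact .inl rfl
    · exact .inr ⟨hu c hc, by linarith [hσu c hc], by linarith [hσu c hc]⟩
    · exact .inr ⟨hv c hc, by linarith [hσv c hc], by linarith [hσv c hc]⟩
  intro c hc c' hc' hne
  have hsep : σ (.inl c) + 4 ≤ σ (.inl c') ∨ σ (.inl c') + 4 ≤ σ (.inl c) := by
    have h := hσ.2.1 _ _ (Sum.inl_injective.ne hne)
    rw [triInst_task_inl_of_mem hc, triInst_task_inl_of_mem hc'] at h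
    exact add_le_or_add_le_of_disjoint_occupied_stretched four_pos four_pos h
  refine Finset.disjoint_left.2 fun x hx hx' => ?_
  rcases hmem c hc x hx with rfl | ⟨hxC, h1, h2⟩ <;>
    rcases hmem c' hc' x hx' with rfl | ⟨hxC', h1', h2'⟩
  · exact hne rfl
  · exact hxC' hc
  · exact hxC hc'
  · rcases hsep with h | h <;> linarith

end TriInst

theorem stmt8_general {V : Type*} [Fintype V] [DecidableEq V] (G : SimpleGraph V)
    (A B C : Finset V) (q : ℕ)
    (hAB : Disjoint A B) (hAC : Disjoint A C) (hBC : Disjoint B C)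
    (hcover : A ∪ B ∪ C = Finset.univ)
    (hcA : A.card = q) (hcB : B.card = q) (hcC : C.card = q)
    (σ : V ⊕ Extra → ℝ) (hσ : (triInst G A B C).Feasible σ)
    (hmk : (triInst G A B C).MakespanLE σ (12 * ((q : ℝ) + 1))) :
    HasTrianglePartition G q := by
  have hV : Fintype.card V = 3 * q := by
    rw [← Finset.card_univ, ← hcover, Finset.card_union_of_disjoint
      (Finset.disjoint_union_left.2 ⟨hAC, hBC⟩), Finset.card_union_of_disjoint hAB, hcA, hcB, hcC]
    ring
  have hocc := hσ.Ico_subset_iUnion_occupied hmk triInst_task_positive <| by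
    rw [triInst_sum_processingTime, hV, hcC]; push_cast; linarith
  choose! u v hu hv hσu hσv hclique using
    fun c (hc : c ∈ C) => triInst_exists_triangle hAC hBC hσ hmk hocc hc
  subst hcC
  exact hasTrianglePartition_of_pairwiseDisjoint hV hclique
    (triInst_pairwiseDisjoint_triangles hσ hu hv hσu hσv)

/-- if the scheduling instance associated with `G` (whose vertex
set is the disjoint union of independent sets `A`, `B`, `C` with
`|A| = |B| = |C| = q`) admits a feasible schedule of makespan at most
`12(q + 1)`, then the vertices of `G` can be partitioned into `q` triangles. -/
theorem stmt8 {V : Type*} [Fintype V] [DecidableEq V] (G : SimpleGraph V)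
    (A B C : Finset V) (q : ℕ)
    (hAB : Disjoint A B) (hAC : Disjoint A C) (hBC : Disjoint B C)
    (hcover : A ∪ B ∪ C = Finset.univ)
    (hcA : A.card = q) (hcB : B.card = q) (hcC : C.card = q)
    (hindA : ∀ u ∈ A, ∀ v ∈ A, ¬ G.Adj u v)
    (hindB : ∀ u ∈ B, ∀ v ∈ B, ¬ G.Adj u v)
    (hindC : ∀ u ∈ C, ∀ v ∈ C, ¬ G.Adj u v)
    (σ : V ⊕ Extra → ℝ) (hσ : (triInst G A B C).Feasible σ)
    (hmk : (triInst G A B C).MakespanLE σ (12 * ((q : ℝ) + 1))) :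
    HasTrianglePartition G q :=
  stmt8_general G A B C q hAB hAC hBC hcover hcA hcB hcC σ hσ hmk
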